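/- Shifting property: for every F ∈ L²(Ĥ) and k ∈ H, the isomorphism T_{H,a} satisfies T_{H,a}(F·χ_k) = U(k)(T_{H,a} F), where χ_k(γ)=(k,γ). -/

import Mathlib

open MeasureTheory Complex

lemma pontryaginDual_compactSpace' {H : Type*} [CommGroup H] [TopologicalSpace H]
    [DiscreteTopology H] [IsTopologicalGroup H] : CompactSpace (PontryaginDual H) := by
  have : CompactSpace C(H, Circle) := by
    rw [← isCompact_univ_iff]
    apply ArzelaAscoli.isCompact_of_equicontinuous
    · have : ContinuousMap.toFun '' (Set.univ : Set C(H, Circle)) = Set.univ := by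
        rw [Set.image_univ, Set.eq_univ_iff_forall]
        exact fun f => ⟨ContinuousMap.mk f continuous_of_discreteTopology, rfl⟩
      rw [this]
      exact isCompact_univ
    · intro x U hU
      rw [nhds_discrete]
      exact Filter.eventually_pure.2 fun i => refl_mem_uniformity hU
  exact (ContinuousMonoidHom.isClosedEmbedding_toContinuousMap H Circle).compactSpace

lemma dense_span_chi' {H : Type*} [CommGroup H] [TopologicalSpace H] [DiscreteTopology H]
    [IsTopologicalGroup H] [Countable H]
    [MeasurableSpace (PontryaginDual H)] [BorelSpace (PontryaginDual H)]
    (μ : Measure (PontryaginDual H)) [μ.IsHaarMeasure] [IsProbabilityMeasure μ]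
    (chi : H → PontryaginDual H → ℂ) (hchi_def : ∀ h γ, chi h γ = (γ h : ℂ))
    (hchi_mem : ∀ h, MemLp (chi h) 2 μ) :
    Dense ((Submodule.span ℂ (Set.range fun h => (hchi_mem h).toLp (chi h)) :
      Submodule ℂ (Lp ℂ 2 μ)) : Set (Lp ℂ 2 μ)) := by
  haveI : CompactSpace (PontryaginDual H) := pontryaginDual_compactSpace'
  haveI : SecondCountableTopology (PontryaginDual H) :=
    (ContinuousMonoidHom.isEmbedding_toContinuousMap H Circle).secondCountableTopology
  haveI : μ.Regular := by
    refine Measure.regular_of_isMulLeftInvariant isCompact_univ ?_ (measure_ne_top μ _)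
    rw [interior_univ]; exact Set.univ_nonempty
  -- continuity of evaluation
  have heval : ∀ h : H, Continuous fun γ : PontryaginDual H => (γ h : ℂ) := by
    intro h
    have h1 : Continuous fun γ : PontryaginDual H =>
        (ContinuousMonoidHom.toContinuousMap γ) h :=
      (continuous_eval_const h).comp
        (ContinuousMonoidHom.isInducing_toContinuousMap H Circle).continuous
    exact continuous_induced_dom.comp h1
  -- the characters as a monoid hom into C(Ĥ, ℂ)
  let χc : H →* C(PontryaginDual H, ℂ) :=
    { toFun := fun h => ContinuousMap.mk (fun γ => (γ h : ℂ)) (heval h)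
      map_one' := by ext γ; show (γ (1 : H) : ℂ) = 1; rw [map_one]; rfl
      map_mul' := fun h₁ h₂ => by
        ext γ
        show (γ (h₁ * h₂) : ℂ) = (γ h₁ : ℂ) * (γ h₂ : ℂ)
        rw [map_mul]; rfl }
  set s : Set C(PontryaginDual H, ℂ) := Set.range χc with hs
  have hstar_chi : ∀ h : H, star (χc h) = χc h⁻¹ := by
    intro h
    ext γ
    show star ((γ h : ℂ)) = (γ h⁻¹ : ℂ)
    rw [map_inv, Circle.coe_inv_eq_conj]
    rfl
  have hclosure : Submonoid.closure (s ∪ star s) = MonoidHom.mrange χc := by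
    apply le_antisymm
    · rw [Submonoid.closure_le]
      rintro f (⟨h, rfl⟩ | hf)
      · exact ⟨h, rfl⟩
      · rw [Set.mem_star] at hf
        obtain ⟨h, hh⟩ := hf
        exact ⟨h⁻¹, by rw [← hstar_chi, hh, star_star]⟩
    · rintro f ⟨h, rfl⟩
      exact Submonoid.subset_closure (Or.inl ⟨h, rfl⟩)
  have hspan : ((StarAlgebra.adjoin ℂ s : StarSubalgebra ℂ C(PontryaginDual H, ℂ)) : Set _)
      = (Submodule.span ℂ s : Set C(PontryaginDual H, ℂ)) := by
    have h2 : ((Submonoid.closure (s ∪ star s) : Submonoid C(PontryaginDual H, ℂ)) : Set _)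
        = s := by rw [hclosure, MonoidHom.coe_mrange]
    have h1 : (StarAlgebra.adjoin ℂ s : Set C(PontryaginDual H, ℂ)) =
        (Submodule.span ℂ (((Submonoid.closure (s ∪ star s) :
          Submonoid C(PontryaginDual H, ℂ)) : Set C(PontryaginDual H, ℂ))) :
            Set C(PontryaginDual H, ℂ)) := by
      rw [← StarAlgebra.adjoin_eq_span]; rfl
    rw [h1, h2]
  -- separates points
  have hsep : (StarAlgebra.adjoin ℂ s).SeparatesPoints := by
    intro γ₁ γ₂ hne
    have : ∃ h : H, γ₁ h ≠ γ₂ h := by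
      by_contra hc
      push_neg at hc
      exact hne (DFunLike.ext _ _ hc)
    obtain ⟨h, hh⟩ := this
    refine ⟨_, ⟨χc h, StarAlgebra.subset_adjoin ℂ s ⟨h, rfl⟩, rfl⟩, ?_⟩
    show (γ₁ h : ℂ) ≠ (γ₂ h : ℂ)
    exact fun hc => hh (Circle.coe_injective hc)
  have htop := ContinuousMap.starSubalgebra_topologicalClosure_eq_top_of_separatesPoints
    (StarAlgebra.adjoin ℂ s) hsep
  have hdenseC : Dense (Submodule.span ℂ s : Set C(PontryaginDual H, ℂ)) := by
    rw [dense_iff_closure_eq, ← hspan, ← StarSubalgebra.topologicalClosure_coe, htop,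
      StarSubalgebra.coe_top]
  -- push to Lp
  have hdr : DenseRange (ContinuousMap.toLp (E := ℂ) 2 μ ℂ) :=
    ContinuousMap.toLp_denseRange ℂ μ ℂ (by norm_num)
  have hdim : Dense ((ContinuousMap.toLp (E := ℂ) 2 μ ℂ) ''
      (Submodule.span ℂ s : Set C(PontryaginDual H, ℂ))) :=
    hdr.dense_image (ContinuousMap.toLp (E := ℂ) 2 μ ℂ).continuous hdenseC
  refine hdim.mono ?_
  rintro _ ⟨f, hf, rfl⟩
  have : (ContinuousMap.toLp (E := ℂ) 2 μ ℂ) f ∈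
      Submodule.map (ContinuousMap.toLp (E := ℂ) 2 μ ℂ : C(PontryaginDual H, ℂ) →ₗ[ℂ] Lp ℂ 2 μ)
        (Submodule.span ℂ s) := ⟨f, hf, rfl⟩
  rw [Submodule.map_span] at this
  refine Submodule.span_mono ?_ this
  rintro _ ⟨_, ⟨h, rfl⟩, rfl⟩
  refine ⟨h, ?_⟩
  apply Lp.ext
  refine (MemLp.coeFn_toLp _).trans ?_
  refine Filter.EventuallyEq.trans ?_ (ContinuousMap.coeFn_toLp (μ := μ) (𝕜 := ℂ) (χc h)).symm
  apply Filter.EventuallyEq.of_eq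
  funext γ
  exact (hchi_def h γ)

/-- Shifting property of the isomorphism `T_{H,a} : L²(Ĥ) → 𝒜_a ⊆ 𝓗` that maps the
orthonormal basis `χ_h` to the Riesz sequence `U(h)a`: for every `F ∈ L²(Ĥ)` and `k ∈ H`,
`T_{H,a}(F · χ_k) = U(k)(T_{H,a} F)`. -/
theorem shifting_property
    {H : Type*} [CommGroup H] [TopologicalSpace H] [DiscreteTopology H]
    [IsTopologicalGroup H] [Countable H]
    [MeasurableSpace (PontryaginDual H)] [BorelSpace (PontryaginDual H)]
    (μ : Measure (PontryaginDual H)) [μ.IsHaarMeasure] [IsProbabilityMeasure μ]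
    {𝓗 : Type*} [NormedAddCommGroup 𝓗] [InnerProductSpace ℂ 𝓗] [CompleteSpace 𝓗]
    [TopologicalSpace.SeparableSpace 𝓗]
    (U : H →* (𝓗 ≃ₗᵢ[ℂ] 𝓗)) (a : 𝓗)
    -- `{U(h)a}` is a Riesz sequence in `𝓗`
    (hRiesz : ∃ A B : ℝ, 0 < A ∧ A ≤ B ∧ ∀ c : H →₀ ℂ,
      A * ∑ h ∈ c.support, ‖c h‖ ^ 2 ≤ ‖∑ h ∈ c.support, c h • (U h) a‖ ^ 2 ∧
      ‖∑ h ∈ c.support, c h • (U h) a‖ ^ 2 ≤ B * ∑ h ∈ c.support, ‖c h‖ ^ 2)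
    (chi : H → PontryaginDual H → ℂ) (hchi_def : ∀ h γ, chi h γ = (γ h : ℂ))
    (hchi_mem : ∀ h, MemLp (chi h) 2 μ)
    -- the isomorphism `T_{H,a}`, sending `χ_h` to `U(h)a`
    (T : Lp ℂ 2 μ →L[ℂ] 𝓗) (hT : ∀ h : H, T ((hchi_mem h).toLp (chi h)) = (U h) a)
    (F : PontryaginDual H → ℂ) (hF : MemLp F 2 μ) (k : H)
    (hFk : MemLp (fun γ => F γ * chi k γ) 2 μ) :
    T (hFk.toLp _) = (U k) (T (hF.toLp F)) := by
  -- `chi k` is bounded and continuous, hence in `L∞`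
  have heval : Continuous fun γ : PontryaginDual H => (γ k : ℂ) := by
    have h1 : Continuous fun γ : PontryaginDual H =>
        (ContinuousMonoidHom.toContinuousMap γ) k :=
      (continuous_eval_const k).comp
        (ContinuousMonoidHom.isInducing_toContinuousMap H Circle).continuous
    exact continuous_induced_dom.comp h1
  have hcont : Continuous (chi k) := by
    have : chi k = fun γ : PontryaginDual H => (γ k : ℂ) := funext fun γ => hchi_def k γ
    rw [this]; exact heval
  have hnorm1 : ∀ γ, ‖chi k γ‖ = 1 := fun γ => by
    rw [hchi_def]
    exact Circle.norm_coe _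
  have htop : MemLp (chi k) ⊤ μ :=
    memLp_top_of_bound hcont.aestronglyMeasurable 1 (ae_of_all _ fun γ => (hnorm1 γ).le)
  -- the multiplication-by-`chi k` operator on `L²`
  have hmem : ∀ f : Lp ℂ 2 μ, MemLp (chi k • ⇑f) 2 μ :=
    fun f => (Lp.memLp f).smul htop
  let Mlin : Lp ℂ 2 μ →ₗ[ℂ] Lp ℂ 2 μ :=
    { toFun := fun f => (hmem f).toLp (chi k • ⇑f)
      map_add' := fun f g => by
        rw [← MemLp.toLp_add]
        apply MemLp.toLp_congr
        filter_upwards [Lp.coeFn_add f g] with γ hγ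
        simp only [Pi.smul_apply', Pi.add_apply, hγ]
        simp only [smul_eq_mul]
        ring
      map_smul' := fun c f => by
        simp only [RingHom.id_apply]
        rw [← MemLp.toLp_const_smul]
        apply MemLp.toLp_congr
        filter_upwards [Lp.coeFn_smul c f] with γ hγ
        simp only [Pi.smul_apply', Pi.smul_apply, hγ]
        simp only [smul_eq_mul]
        ring }
  have hMbound : ∀ f : Lp ℂ 2 μ, ‖Mlin f‖ ≤ 1 * ‖f‖ := by
    intro f
    have : eLpNorm (chi k • ⇑f) 2 μ = eLpNorm (⇑f) 2 μ := by
      apply eLpNorm_congr_norm_ae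
      apply ae_of_all
      intro γ
      simp only [Pi.smul_apply', smul_eq_mul, norm_mul, hnorm1 γ, one_mul]
    show ‖(hmem f).toLp (chi k • ⇑f)‖ ≤ 1 * ‖f‖
    rw [Lp.norm_toLp _ (hmem f), this, one_mul, Lp.norm_def]
  let M : Lp ℂ 2 μ →L[ℂ] Lp ℂ 2 μ := Mlin.mkContinuous 1 hMbound
  have hM : ∀ (G : PontryaginDual H → ℂ) (hG : MemLp G 2 μ),
      M (hG.toLp G) = (hG.smul htop).toLp (chi k • G) := by
    intro G hG
    show (hmem (hG.toLp G)).toLp _ = _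
    apply MemLp.toLp_congr
    filter_upwards [hG.coeFn_toLp] with γ hγ
    simp only [Pi.smul_apply', hγ]
  -- the two continuous linear maps agree on the characters
  have hUk : Continuous fun x : 𝓗 => (U k) x := (U k).continuous
  let L2 : Lp ℂ 2 μ →L[ℂ] 𝓗 := ((U k).toLinearIsometry.toContinuousLinearMap).comp T
  have hagree : ∀ h : H, (T.comp M) ((hchi_mem h).toLp (chi h)) =
      L2 ((hchi_mem h).toLp (chi h)) := by
    intro h
    have e1 : ((hchi_mem h).smul htop).toLp (chi k • chi h) =
        (hchi_mem (h * k)).toLp (chi (h * k)) := by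
      apply MemLp.toLp_congr
      apply ae_of_all
      intro γ
      simp only [Pi.smul_apply', smul_eq_mul, hchi_def, map_mul]
      push_cast
      ring
    show T (M ((hchi_mem h).toLp (chi h))) = (U k) (T ((hchi_mem h).toLp (chi h)))
    rw [hM (chi h) (hchi_mem h), e1, hT, hT h]
    rw [mul_comm h k, map_mul]
    rfl
  have heq : T.comp M = L2 := by
    apply ContinuousLinearMap.ext_on
      (dense_span_chi' μ chi hchi_def hchi_mem)
    rintro _ ⟨h, rfl⟩
    exact hagree h
  have hfinal := ContinuousLinearMap.ext_iff.1 heq (hF.toLp F)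
  have e2 : M (hF.toLp F) = hFk.toLp _ := by
    rw [hM F hF]
    apply MemLp.toLp_congr
    apply ae_of_all
    intro γ
    simp only [Pi.smul_apply', smul_eq_mul]
    ring
  calc T (hFk.toLp _) = T (M (hF.toLp F)) := by rw [e2]
    _ = (U k) (T (hF.toLp F)) := hfinal
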